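/- Let P1, P2, Q1, Q2 : ℝ → ℝ be positive differentiable functions with P2' + Q2' = μ·P1 + μ'·Q1 - r2·(P2+Q2), let N = P1+P2+Q1+Q2 satisfy N' = λ·N, and suppose (P2+Q2)/N = φ is constant with 0 < φ < 1. Define the crude progression rate μ̂ by μ̂·(P1+Q1) = μ·P1 + μ'·Q1. Then μ̂ = (r2 + λ)·φ/(1-φ). -/

import Mathlib

/-! Since `P2 + Q2 = φ N` and `N' = λ N`, the managerial inflow `(P2 + Q2)'` equals `φ λ N`.
Writing the flux equation with `μ P1 + μ' Q1 = μ̂ (P1 + Q1) = μ̂ (1 - φ) N` gives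
`φ λ N = μ̂ (1 - φ) N - r2 φ N`, and dividing by `(1 - φ) N` yields the rate. -/

lemma ne_zero_of_div_eq_of_ne_zero {K : Type*} [DivisionRing K] {a b c : K}
    (h : a / b = c) (hc : c ≠ 0) : b ≠ 0 := by
  rintro rfl
  exact hc (by simpa using h.symm)

lemma deriv_add_eq_const_mul_deriv {f g N : ℝ → ℝ} {φ t : ℝ}
    (hf : DifferentiableAt ℝ f t) (hg : DifferentiableAt ℝ g t)
    (h : ∀ s, f s + g s = φ * N s) :
    deriv f t + deriv g t = φ * deriv N t := by
  rw [← deriv_fun_add hf hg, funext h, deriv_const_mul_field']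

lemma eq_div_of_balance {K : Type*} [Field K] {muhat r2 lam φ n : K}
    (hn : n ≠ 0) (hφ : φ ≠ 1)
    (h : φ * (lam * n) = muhat * ((1 - φ) * n) - r2 * (φ * n)) :
    muhat = (r2 + lam) * φ / (1 - φ) := by
  have h1φ : 1 - φ ≠ 0 := sub_ne_zero.mpr hφ.symm
  rw [eq_div_iff h1φ]
  apply mul_right_cancel₀ hn
  linear_combination -h

theorem crude_progression_rate_general
    (P1 P2 Q1 Q2 : ℝ → ℝ) (μ μ' r2 lam φ muhat : ℝ)
    (hP2 : Differentiable ℝ P2) (hQ2 : Differentiable ℝ Q2)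
    (hflux : ∀ t, deriv P2 t + deriv Q2 t
      = μ * P1 t + μ' * Q1 t - r2 * (P2 t + Q2 t))
    (N : ℝ → ℝ) (hN : N = fun t => P1 t + P2 t + Q1 t + Q2 t)
    (hN' : ∀ t, deriv N t = lam * N t)
    (hφ : ∀ t, (P2 t + Q2 t) / N t = φ) (hφ0 : 0 < φ) (hφ1 : φ < 1)
    (hmuhat : ∀ t, muhat * (P1 t + Q1 t) = μ * P1 t + μ' * Q1 t) :
    muhat = (r2 + lam) * φ / (1 - φ) := by
  have hN_ne : ∀ t, N t ≠ 0 := fun t => ne_zero_of_div_eq_of_ne_zero (hφ t) hφ0.ne'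
  have hM : ∀ t, P2 t + Q2 t = φ * N t := fun t => (div_eq_iff (hN_ne t)).mp (hφ t)
  have hentry : P1 0 + Q1 0 = (1 - φ) * N 0 := by
    have hN0 : N 0 = P1 0 + P2 0 + Q1 0 + Q2 0 := congrFun hN 0
    linear_combination -hN0 - hM 0
  have hbalance := deriv_add_eq_const_mul_deriv (hP2 0) (hQ2 0) hM
  rw [hN' 0, hflux 0, ← hmuhat 0, hentry, hM 0] at hbalance
  exact eq_div_of_balance (hN_ne 0) hφ1.ne hbalance.symm

theorem crude_progression_rate
    (P1 P2 Q1 Q2 : ℝ → ℝ) (μ μ' r2 lam φ muhat : ℝ)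
    (hP1pos : ∀ t, 0 < P1 t) (hP2pos : ∀ t, 0 < P2 t)
    (hQ1pos : ∀ t, 0 < Q1 t) (hQ2pos : ∀ t, 0 < Q2 t)
    (hP1 : Differentiable ℝ P1) (hP2 : Differentiable ℝ P2)
    (hQ1 : Differentiable ℝ Q1) (hQ2 : Differentiable ℝ Q2)
    (hflux : ∀ t, deriv P2 t + deriv Q2 t
      = μ * P1 t + μ' * Q1 t - r2 * (P2 t + Q2 t))
    (N : ℝ → ℝ) (hN : N = fun t => P1 t + P2 t + Q1 t + Q2 t)
    (hN' : ∀ t, deriv N t = lam * N t)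
    (hφ : ∀ t, (P2 t + Q2 t) / N t = φ) (hφ0 : 0 < φ) (hφ1 : φ < 1)
    (hmuhat : ∀ t, muhat * (P1 t + Q1 t) = μ * P1 t + μ' * Q1 t) :
    muhat = (r2 + lam) * φ / (1 - φ) :=
  crude_progression_rate_general P1 P2 Q1 Q2 μ μ' r2 lam φ muhat hP2 hQ2 hflux N hN hN' hφ hφ0 hφ1
    hmuhat
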